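/- arXiv:2405.18354 — 3 statements merged into one kernel-verified Lean document; each statement's English description precedes it below -/
import Mathlib

section
/- Let G be a group acting on a set S with action of type (A), and let H be a group acting on a set T with action of type (A). Then the action of the direct product G × H on the disjoint union S ⊔ T, defined by (g,h)·s = g·s for s ∈ S and (g,h)·t = h·t for t ∈ T (so G fixes T pointwise and H fixes S pointwise), is of type (A). -/
open Pointwise

universe u v u' v'

/-- A group is finitely presented: it is isomorphic to a presented group on finitely many
generators with finitely many relators. -/
def FinPresGroup (G : Type u) [Group G] : Prop :=
  ∃ (n : ℕ) (rels : Set (FreeGroup (Fin n))), rels.Finite ∧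
    Nonempty (PresentedGroup rels ≃* G)

/-- The action of `G` on `S` is of type (A): it is faithful, `G` is finitely presented,
every point stabilizer is finitely generated, and there are finitely many `G`-orbits of
two-element subsets of `S`. -/
def IsTypeA (G : Type u) [Group G] (S : Type v) [MulAction G S] : Prop :=
  (∀ g : G, (∀ s : S, g • s = s) → g = 1) ∧
  FinPresGroup G ∧
  (∀ s : S, (MulAction.stabilizer G s).FG) ∧
  ∃ F : Set (Set S), F.Finite ∧ (∀ U ∈ F, U.ncard = 2) ∧
    ∀ T : Set S, T.ncard = 2 → ∃ U ∈ F, ∃ g : G, g • U = T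

/-- The action of `G × H` on the disjoint union `S ⊕ T`, where the `G`-coordinate acts on
`S` (fixing `T` pointwise) and the `H`-coordinate acts on `T` (fixing `S` pointwise). -/
def sumMulAction (G : Type u) [Group G] (H : Type u') [Group H]
    (S : Type v) [MulAction G S] (T : Type v') [MulAction H T] :
    MulAction (G × H) (S ⊕ T) where
  smul p x := Sum.elim (fun s => Sum.inl (p.1 • s)) (fun t => Sum.inr (p.2 • t)) x
  one_smul x := by
    cases x with
    | inl s => exact congrArg Sum.inl (one_smul G s)
    | inr t => exact congrArg Sum.inr (one_smul H t)
  mul_smul p q x := by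
    cases x with
    | inl s => exact congrArg Sum.inl (mul_smul p.1 q.1 s)
    | inr t => exact congrArg Sum.inr (mul_smul p.2 q.2 t)

open scoped commutatorElement
theorem FinPresGroup.myprod {G : Type*} [Group G] {H : Type*} [Group H]
    (hG : FinPresGroup G) (hH : FinPresGroup H) : FinPresGroup (G × H) := by
  obtain ⟨n, R, hRfin, ⟨e⟩⟩ := hG
  obtain ⟨m, Q, hQfin, ⟨e'⟩⟩ := hH
  set ι : Fin n → Fin (n + m) := Fin.castAdd m with hι
  set κ : Fin m → Fin (n + m) := Fin.natAdd n with hκ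
  set comms : Set (FreeGroup (Fin (n + m))) :=
    Set.image2 (fun i j => ⁅(FreeGroup.of (ι i) : FreeGroup (Fin (n+m))), FreeGroup.of (κ j)⁆)
      Set.univ Set.univ with hcomms
  set rels' : Set (FreeGroup (Fin (n + m))) :=
    (FreeGroup.map ι '' R ∪ FreeGroup.map κ '' Q) ∪ comms with hrels'
  refine ⟨n + m, rels', ((hRfin.image _).union (hQfin.image _)).union
    (Set.Finite.image2 _ Set.finite_univ Set.finite_univ), ?_⟩
  -- the target map on generators
  set f : Fin (n + m) → G × H :=
    Fin.addCases (fun i => (e (.of i), 1)) (fun j => (1, e' (.of j))) with hf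
  have hmk1 : ∀ w ∈ R, PresentedGroup.mk R w = 1 := fun w hw =>
    (QuotientGroup.eq_one_iff w).mpr (Subgroup.subset_normalClosure hw)
  have hmk1' : ∀ w ∈ Q, PresentedGroup.mk Q w = 1 := fun w hw =>
    (QuotientGroup.eq_one_iff w).mpr (Subgroup.subset_normalClosure hw)
  have hmk2 : ∀ w ∈ rels', PresentedGroup.mk rels' w = 1 := fun w hw =>
    (QuotientGroup.eq_one_iff w).mpr (Subgroup.subset_normalClosure hw)
  -- relations hold in G × H
  have hfrel : ∀ r ∈ rels', FreeGroup.lift f r = 1 := by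
    rintro r ((⟨w, hw, rfl⟩ | ⟨w, hw, rfl⟩) | hr)
    · have hcomp : (FreeGroup.lift f).comp (FreeGroup.map ι)
          = ((MonoidHom.inl G H).comp e.toMonoidHom).comp (PresentedGroup.mk R) := by
        apply FreeGroup.ext_hom
        intro a
        simp [f, hι, PresentedGroup.of]
      have := congrArg (fun φ : FreeGroup (Fin n) →* G × H => φ w) hcomp
      simp only [MonoidHom.comp_apply] at this
      rw [this, hmk1 w hw]
      simp
    · have hcomp : (FreeGroup.lift f).comp (FreeGroup.map κ)
          = ((MonoidHom.inr G H).comp e'.toMonoidHom).comp (PresentedGroup.mk Q) := by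
        apply FreeGroup.ext_hom
        intro a
        simp [f, hκ, PresentedGroup.of]
      have := congrArg (fun φ : FreeGroup (Fin m) →* G × H => φ w) hcomp
      simp only [MonoidHom.comp_apply] at this
      rw [this, hmk1' w hw]
      simp
    · obtain ⟨i, -, j, -, rfl⟩ := hr
      simp only [commutatorElement_def, map_mul, map_inv, FreeGroup.lift_apply_of]
      have h1 : f (ι i) = (e (.of i), 1) := by simp [f, hι]
      have h2 : f (κ j) = (1, e' (.of j)) := by simp [f, hκ]
      rw [h1, h2]
      ext <;> simp
  set π : PresentedGroup rels' →* G × H := PresentedGroup.toGroup hfrel with hπ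
  -- maps into the big presented group
  have hθrel : ∀ r ∈ R, FreeGroup.lift (fun i => (PresentedGroup.of (ι i) :
      PresentedGroup rels')) r = 1 := by
    intro r hr
    have hcomp : FreeGroup.lift (fun i => (PresentedGroup.of (ι i) : PresentedGroup rels'))
        = (PresentedGroup.mk rels').comp (FreeGroup.map ι) := by
      apply FreeGroup.ext_hom; intro a; simp [PresentedGroup.of]
    rw [hcomp]
    exact hmk2 _ (Or.inl (Or.inl ⟨r, hr, rfl⟩))
  have hθ'rel : ∀ r ∈ Q, FreeGroup.lift (fun j => (PresentedGroup.of (κ j) :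
      PresentedGroup rels')) r = 1 := by
    intro r hr
    have hcomp : FreeGroup.lift (fun j => (PresentedGroup.of (κ j) : PresentedGroup rels'))
        = (PresentedGroup.mk rels').comp (FreeGroup.map κ) := by
      apply FreeGroup.ext_hom; intro a; simp [PresentedGroup.of]
    rw [hcomp]
    exact hmk2 _ (Or.inl (Or.inr ⟨r, hr, rfl⟩))
  set θ : PresentedGroup R →* PresentedGroup rels' := PresentedGroup.toGroup hθrel with hθ
  set θ' : PresentedGroup Q →* PresentedGroup rels' := PresentedGroup.toGroup hθ'rel with hθ'
  set σ : G →* PresentedGroup rels' := θ.comp e.symm.toMonoidHom with hσ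
  set τ : H →* PresentedGroup rels' := θ'.comp e'.symm.toMonoidHom with hτ
  -- generators commute
  have hgen : ∀ (i : Fin n) (j : Fin m),
      Commute (PresentedGroup.of (ι i) : PresentedGroup rels') (PresentedGroup.of (κ j)) := by
    intro i j
    rw [← commutatorElement_eq_one_iff_commute]
    have := hmk2 _ (Or.inr (Set.mem_image2_of_mem (Set.mem_univ i) (Set.mem_univ j)))
    simpa [commutatorElement_def, PresentedGroup.of, map_mul, map_inv] using this
  have hθmem : ∀ (x : PresentedGroup R),
      θ x ∈ Subgroup.centralizer (Set.range fun j => (PresentedGroup.of (κ j) :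
        PresentedGroup rels')) := by
    intro x
    refine PresentedGroup.generated_by R
      ((Subgroup.centralizer _).comap θ) (fun i => ?_) x
    simp only [Subgroup.mem_comap, hθ, PresentedGroup.toGroup.of]
    rw [Subgroup.mem_centralizer_iff]
    rintro p ⟨j, rfl⟩
    exact (hgen i j).symm.eq
  have hcomm : ∀ (g : G) (h : H), Commute (σ g) (τ h) := by
    intro g h
    show Commute (θ (e.symm g)) (θ' (e'.symm h))
    have hmem : θ' (e'.symm h) ∈ Subgroup.centralizer {θ (e.symm g)} := by
      refine PresentedGroup.generated_by Q
        ((Subgroup.centralizer {θ (e.symm g)}).comap θ') (fun j => ?_) (e'.symm h)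
      simp only [Subgroup.mem_comap, hθ', PresentedGroup.toGroup.of]
      rw [Subgroup.mem_centralizer_iff]
      rintro p rfl
      exact (Subgroup.mem_centralizer_iff.mp (hθmem (e.symm g)) _ ⟨j, rfl⟩).symm
    exact Subgroup.mem_centralizer_iff.mp hmem _ (Set.mem_singleton _)
  set Φ : G × H →* PresentedGroup rels' := MonoidHom.noncommCoprod σ τ hcomm with hΦ
  -- the two compositions are identities
  have hπθ : ∀ x : PresentedGroup R, π (θ x) = (e x, 1) := by
    have : π.comp θ = (MonoidHom.inl G H).comp e.toMonoidHom := by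
      apply PresentedGroup.ext
      intro i
      simp only [MonoidHom.comp_apply, hθ, hπ, PresentedGroup.toGroup.of]
      simp [f, hι]
    intro x
    exact congrArg (fun φ : PresentedGroup R →* G × H => φ x) this
  have hπθ' : ∀ x : PresentedGroup Q, π (θ' x) = (1, e' x) := by
    have : π.comp θ' = (MonoidHom.inr G H).comp e'.toMonoidHom := by
      apply PresentedGroup.ext
      intro j
      simp only [MonoidHom.comp_apply, hθ', hπ, PresentedGroup.toGroup.of]
      simp [f, hκ]
    intro x
    exact congrArg (fun φ : PresentedGroup Q →* G × H => φ x) this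
  have h₁ : Φ.comp π = MonoidHom.id (PresentedGroup rels') := by
    apply PresentedGroup.ext
    intro k
    simp only [MonoidHom.comp_apply, MonoidHom.id_apply, hπ, PresentedGroup.toGroup.of]
    induction k using Fin.addCases with
    | left i =>
      have : f (ι i) = (e (.of i), 1) := by simp [f, hι]
      rw [show (Fin.castAdd m i) = ι i from rfl, this, hΦ]
      simp only [MonoidHom.noncommCoprod_apply]
      rw [map_one, mul_one, hσ]
      simp only [MonoidHom.comp_apply, MulEquiv.coe_toMonoidHom, MulEquiv.symm_apply_apply]
      simp [hθ]
    | right j =>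
      have : f (κ j) = (1, e' (.of j)) := by simp [f, hκ]
      rw [show (Fin.natAdd n j) = κ j from rfl, this, hΦ]
      simp only [MonoidHom.noncommCoprod_apply]
      rw [map_one, one_mul, hτ]
      simp only [MonoidHom.comp_apply, MulEquiv.coe_toMonoidHom, MulEquiv.symm_apply_apply]
      simp [hθ']
  have h₂ : π.comp Φ = MonoidHom.id (G × H) := by
    apply MonoidHom.ext
    rintro ⟨g, h⟩
    simp only [MonoidHom.comp_apply, MonoidHom.id_apply, hΦ, MonoidHom.noncommCoprod_apply]
    rw [map_mul]
    have h1 : π (σ g) = (g, 1) := by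
      rw [hσ]
      simp only [MonoidHom.comp_apply, MulEquiv.coe_toMonoidHom]
      rw [hπθ]
      simp
    have h2 : π (τ h) = (1, h) := by
      rw [hτ]
      simp only [MonoidHom.comp_apply, MulEquiv.coe_toMonoidHom]
      rw [hπθ']
      simp
    rw [h1, h2, Prod.mk_mul_mk, mul_one, one_mul]
  exact ⟨MonoidHom.toMulEquiv π Φ h₁ h₂⟩

theorem FinPresGroup.toFG {G : Type*} [Group G] (hG : FinPresGroup G) : Group.FG G := by
  obtain ⟨n, R, -, ⟨e⟩⟩ := hG
  have : Group.FG (PresentedGroup R) := by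
    rw [Group.fg_iff]
    exact ⟨Set.range PresentedGroup.of, PresentedGroup.closure_range_of R,
      Set.finite_range _⟩
  exact Group.fg_of_surjective (f := e.toMonoidHom) e.surjective

theorem Subgroup.FG.myprod {G H : Type*} [Group G] [Group H] {K : Subgroup G} {L : Subgroup H}
    (hK : K.FG) (hL : L.FG) : (K.prod L).FG := by
  obtain ⟨A, hA, hAfin⟩ := (Subgroup.fg_iff K).mp hK
  obtain ⟨B, hB, hBfin⟩ := (Subgroup.fg_iff L).mp hL
  rw [Subgroup.fg_iff]
  refine ⟨(insert 1 A) ×ˢ (insert 1 B), ?_, (hAfin.insert 1).prod (hBfin.insert 1)⟩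
  rw [Subgroup.closure_prod (Set.mem_insert 1 A) (Set.mem_insert 1 B)]
  have h1 : Subgroup.closure (insert 1 A) = K := by
    rw [← hA]
    refine le_antisymm (Subgroup.closure_le _ |>.mpr ?_) (Subgroup.closure_mono (Set.subset_insert _ _))
    rintro x (rfl | hx)
    · exact one_mem _
    · exact Subgroup.subset_closure hx
  have h2 : Subgroup.closure (insert 1 B) = L := by
    rw [← hB]
    refine le_antisymm (Subgroup.closure_le _ |>.mpr ?_) (Subgroup.closure_mono (Set.subset_insert _ _))
    rintro x (rfl | hx)
    · exact one_mem _
    · exact Subgroup.subset_closure hx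
  rw [h1, h2]

theorem Group.FG.top_fg {G : Type*} [Group G] (h : Group.FG G) : (⊤ : Subgroup G).FG := by
  obtain ⟨S, hS, hSfin⟩ := Group.fg_iff.mp h
  exact (Subgroup.fg_iff ⊤).mpr ⟨S, hS, hSfin⟩

theorem exists_orbit_reps {G : Type*} [Group G] {S : Type*} [MulAction G S]
    (h : ∃ F : Set (Set S), F.Finite ∧ (∀ U ∈ F, U.ncard = 2) ∧
      ∀ T : Set S, T.ncard = 2 → ∃ U ∈ F, ∃ g : G, g • U = T) :
    ∃ R : Set S, R.Finite ∧ ∀ s : S, ∃ r ∈ R, ∃ g : G, g • r = s := by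
  obtain ⟨F, hFfin, hF2, hFcov⟩ := h
  by_cases hS : ∃ a b : S, a ≠ b
  · refine ⟨⋃₀ F, hFfin.sUnion (fun U hU => Set.finite_of_ncard_ne_zero
      (by rw [hF2 U hU]; norm_num)), fun s => ?_⟩
    obtain ⟨a, b, hab⟩ := hS
    obtain ⟨s', hs'⟩ : ∃ s', s ≠ s' := by
      rcases eq_or_ne s a with rfl | hsa
      · exact ⟨b, hab⟩
      · exact ⟨a, hsa⟩
    obtain ⟨U, hU, g, hgU⟩ := hFcov {s, s'} (Set.ncard_pair hs')
    have hmem : s ∈ g • U := by rw [hgU]; exact Set.mem_insert _ _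
    obtain ⟨r, hr, hgr⟩ := hmem
    exact ⟨r, ⟨U, hU, hr⟩, g, hgr⟩
  · push_neg at hS
    refine ⟨Set.univ, ?_, fun s => ⟨s, trivial, 1, one_smul _ _⟩⟩
    exact Set.Subsingleton.finite (fun a _ b _ => hS a b)

/-- If the action of `G` on `S` is of type (A) and the action of `H` on `T` is of type (A),
then the action of `G × H` on `S ⊕ T` (where `G` fixes `T` pointwise and `H` fixes `S`
pointwise) is of type (A). -/
theorem isTypeA_prod_sum (G : Type u) [Group G] (H : Type u') [Group H]
    (S : Type v) [MulAction G S] (T : Type v') [MulAction H T]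
    (hGS : IsTypeA G S) (hHT : IsTypeA H T) :
    @IsTypeA (G × H) _ (S ⊕ T) (sumMulAction G H S T) := by
  obtain ⟨hGf, hGp, hGstab, hGF⟩ := hGS
  obtain ⟨hHf, hHp, hHstab, hHF⟩ := hHT
  letI inst : MulAction (G × H) (S ⊕ T) := sumMulAction G H S T
  have smul_inl : ∀ (p : G × H) (s : S), p • (Sum.inl s : S ⊕ T) = Sum.inl (p.1 • s) :=
    fun _ _ => rfl
  have smul_inr : ∀ (p : G × H) (t : T), p • (Sum.inr t : S ⊕ T) = Sum.inr (p.2 • t) :=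
    fun _ _ => rfl
  refine ⟨?_, FinPresGroup.myprod hGp hHp, ?_, ?_⟩
  · rintro ⟨g, h⟩ hfix
    have hg : g = 1 := hGf g fun s => Sum.inl.inj ((smul_inl (g, h) s).symm.trans (hfix (Sum.inl s)))
    have hh : h = 1 := hHf h fun t => Sum.inr.inj ((smul_inr (g, h) t).symm.trans (hfix (Sum.inr t)))
    exact Prod.ext hg hh
  · rintro (s | t)
    · have hst : MulAction.stabilizer (G × H) (Sum.inl s : S ⊕ T)
          = (MulAction.stabilizer G s).prod ⊤ := by
        ext ⟨g, h⟩
        rw [MulAction.mem_stabilizer_iff, Subgroup.mem_prod, smul_inl]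
        simp [MulAction.mem_stabilizer_iff]
      rw [hst]
      exact Subgroup.FG.myprod (hGstab s) hHp.toFG.top_fg
    · have hst : MulAction.stabilizer (G × H) (Sum.inr t : S ⊕ T)
          = (⊤ : Subgroup G).prod (MulAction.stabilizer H t) := by
        ext ⟨g, h⟩
        rw [MulAction.mem_stabilizer_iff, Subgroup.mem_prod, smul_inr]
        simp [MulAction.mem_stabilizer_iff]
      rw [hst]
      exact Subgroup.FG.myprod hGp.toFG.top_fg (hHstab t)
  · obtain ⟨RS, hRSfin, hRScov⟩ := exists_orbit_reps hGF
    obtain ⟨RT, hRTfin, hRTcov⟩ := exists_orbit_reps hHF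
    obtain ⟨FS, hFSfin, hFS2, hFScov⟩ := hGF
    obtain ⟨FT, hFTfin, hFT2, hFTcov⟩ := hHF
    have key_inl : ∀ (p : G × H) (A : Set S),
        p • (Sum.inl '' A : Set (S ⊕ T)) = Sum.inl '' (p.1 • A) := by
      intro p A
      rw [← Set.image_smul, ← Set.image_smul, Set.image_image, Set.image_image]
      rfl
    have key_inr : ∀ (p : G × H) (B : Set T),
        p • (Sum.inr '' B : Set (S ⊕ T)) = Sum.inr '' (p.2 • B) := by
      intro p B
      rw [← Set.image_smul, ← Set.image_smul, Set.image_image, Set.image_image]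
      rfl
    refine ⟨((fun U => Sum.inl '' U) '' FS ∪ (fun V => Sum.inr '' V) '' FT) ∪
      Set.image2 (fun r r' => {Sum.inl r, Sum.inr r'}) RS RT,
      ((hFSfin.image _).union (hFTfin.image _)).union
        (Set.Finite.image2 _ hRSfin hRTfin), ?_, ?_⟩
    · rintro U ((⟨V, hV, rfl⟩ | ⟨V, hV, rfl⟩) | ⟨r, -, r', -, rfl⟩)
      · rw [Set.ncard_image_of_injective _ Sum.inl_injective]; exact hFS2 V hV
      · rw [Set.ncard_image_of_injective _ Sum.inr_injective]; exact hFT2 V hV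
      · exact Set.ncard_pair (by simp)
    · intro W hW
      obtain ⟨x, y, hxy, rfl⟩ := Set.ncard_eq_two.mp hW
      rcases x with s₁ | t₁ <;> rcases y with s₂ | t₂
      · have hne : s₁ ≠ s₂ := fun hc => hxy (by rw [hc])
        obtain ⟨U, hU, g, hgU⟩ := hFScov {s₁, s₂} (Set.ncard_pair hne)
        refine ⟨Sum.inl '' U, Or.inl (Or.inl ⟨U, hU, rfl⟩), (g, 1), ?_⟩
        rw [key_inl, hgU, Set.image_insert_eq, Set.image_singleton]
      · obtain ⟨r, hr, g, hgr⟩ := hRScov s₁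
        obtain ⟨r', hr', h, hhr⟩ := hRTcov t₂
        refine ⟨{Sum.inl r, Sum.inr r'}, Or.inr (Set.mem_image2_of_mem hr hr'), (g, h), ?_⟩
        rw [Set.smul_set_insert, Set.smul_set_singleton, smul_inl, smul_inr, hgr, hhr]
      · obtain ⟨r, hr, g, hgr⟩ := hRScov s₂
        obtain ⟨r', hr', h, hhr⟩ := hRTcov t₁
        refine ⟨{Sum.inl r, Sum.inr r'}, Or.inr (Set.mem_image2_of_mem hr hr'), (g, h), ?_⟩
        rw [Set.smul_set_insert, Set.smul_set_singleton, smul_inl, smul_inr, hgr, hhr,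
          Set.pair_comm]
      · have hne : t₁ ≠ t₂ := fun hc => hxy (by rw [hc])
        obtain ⟨V, hV, h, hhV⟩ := hFTcov {t₁, t₂} (Set.ncard_pair hne)
        refine ⟨Sum.inr '' V, Or.inl (Or.inr ⟨V, hV, rfl⟩), (1, h), ?_⟩
        rw [key_inr, hhV, Set.image_insert_eq, Set.image_singleton]
end

section
/- Let G be a finitely presented group that is the internal Zappa–Szép product of subgroups H and K (i.e., G = HK and H ∩ K = {1}), with H finitely generated. Let φ : K × H → K be the right action of H on the set K defined by letting φ(k,h) be the unique element k' ∈ K such that kh = h'k' for some h' ∈ H. If the action φ is faithful and has finitely many orbits, then G admits an action of type (A) on some set. -/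
open Pointwise

universe u v

/-- The group `G` admits an action of type (A) on some set. -/
def AdmitsTypeA.{a, b} (G : Type a) [Group G] : Prop :=
  ∃ (S : Type b) (_ : MulAction G S), IsTypeA G S

section Aux

/-- Finite generation of subgroups is preserved by maps. -/
theorem Subgroup.FG.map' {G : Type*} {G' : Type*} [Group G] [Group G']
    {H : Subgroup G} (h : H.FG) (f : G →* G') : (H.map f).FG := by
  rw [Subgroup.fg_iff] at h ⊢
  obtain ⟨S, hS, hfin⟩ := h
  exact ⟨f '' S, by rw [← hS, MonoidHom.map_closure], hfin.image f⟩

/-- Transfer a mul action along an equivalence. -/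
def Equiv.transferMulAction {G : Type*} [Group G] {S : Type*} {S' : Type*} [MulAction G S]
    (e : S' ≃ S) : MulAction G S' where
  smul g s := e.symm (g • e s)
  one_smul s := by
    show e.symm ((1 : G) • e s) = s
    simp
  mul_smul g g' s := by
    show e.symm ((g * g') • e s) = e.symm (g • e (e.symm (g' • e s)))
    simp [mul_smul]

/-- Type (A) actions transfer along equivalences. -/
theorem isTypeA_transfer {G : Type*} [Group G] {S : Type*} {S' : Type*} [MulAction G S]
    (e : S' ≃ S) (h : IsTypeA G S) : ∃ _ : MulAction G S', IsTypeA G S' := by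
  classical
  letI inst : MulAction G S' := e.transferMulAction
  have hsmul : ∀ (g : G) (s' : S'), g • s' = e.symm (g • e s') := fun _ _ => rfl
  obtain ⟨hfaith, hfp, hstab, F, hFfin, hF2, hFcov⟩ := h
  have hsmulset : ∀ (g : G) (U : Set S), g • (e.symm '' U) = e.symm '' (g • U) := by
    intro g U
    ext t
    simp only [Set.mem_smul_set, Set.mem_image]
    constructor
    · rintro ⟨t', ⟨s, hs, rfl⟩, rfl⟩
      exact ⟨g • s, ⟨s, hs, rfl⟩, by rw [hsmul]; simp⟩
    · rintro ⟨s', ⟨s, hs, rfl⟩, rfl⟩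
      exact ⟨e.symm s, ⟨s, hs, rfl⟩, by rw [hsmul]; simp⟩
  refine ⟨inst, ?_, hfp, ?_, ?_⟩
  · intro g hg
    apply hfaith
    intro s
    have := hg (e.symm s)
    rw [hsmul] at this
    have := congrArg e this
    simpa using this
  · intro s'
    have hst : MulAction.stabilizer G s' = MulAction.stabilizer G (e s') := by
      ext g
      simp only [MulAction.mem_stabilizer_iff, hsmul]
      rw [Equiv.symm_apply_eq]
    rw [hst]
    exact hstab _
  · refine ⟨(fun U => e.symm '' U) '' F, hFfin.image _, ?_, ?_⟩
    · rintro U ⟨V, hV, rfl⟩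
      rw [Set.ncard_image_of_injective _ e.symm.injective]
      exact hF2 V hV
    · intro T hT
      have hT' : (e '' T).ncard = 2 := by
        rw [Set.ncard_image_of_injective _ e.injective]; exact hT
      obtain ⟨U, hU, g, hg⟩ := hFcov _ hT'
      refine ⟨_, ⟨U, hU, rfl⟩, g, ?_⟩
      rw [hsmulset, hg, Equiv.symm_image_image]

end Aux

/-- Let `G = H ⋈ K` be a finitely presented group that is the internal Zappa--Szép product
of a finitely generated subgroup `H` and a subgroup `K` (that is, `G = HK` and
`H ∩ K = {1}`), and let `φ : K × H → K` be the resulting right action of `H` on the set `K`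
(so `φ(k,h)` is the unique `k' ∈ K` with `k·h = h'·k'` for some `h' ∈ H`). If `φ` is
faithful (i.e. the only `h ∈ H` fixing every `k ∈ K` is `h = 1`) and has finitely many
orbits, then `G` admits an action of type (A) on some set. -/
theorem admitsTypeA_of_zappaSzep (G : Type u) [Group G] (hfp : FinPresGroup G)
    (H K : Subgroup G) (hprod : ∀ g : G, ∃ h ∈ H, ∃ k ∈ K, g = h * k)
    (hint : H ⊓ K = ⊥) (hHfg : H.FG)
    (hfaith : ∀ h ∈ H, (∀ k ∈ K, ∃ h' ∈ H, k * h = h' * k) → h = 1)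
    (horb : ∃ F : Set G, F.Finite ∧ (∀ f ∈ F, f ∈ K) ∧
      ∀ k ∈ K, ∃ f ∈ F, ∃ h ∈ H, ∃ h' ∈ H, f * h = h' * k) :
    AdmitsTypeA.{u, v} G := by
  classical
  obtain ⟨F, hFfin, hFK, hFcov⟩ := horb
  -- The action of `G` on the coset space `G ⧸ H` is of type (A).
  have main : IsTypeA G (G ⧸ H) := by
    refine ⟨?_, hfp, ?_, ?_⟩
    · -- faithfulness
      intro g hg
      have hmem : ∀ x : G, x⁻¹ * (g * x) ∈ H := by
        intro x
        have := hg ((x : G ⧸ H))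
        rw [MulAction.Quotient.smul_mk, smul_eq_mul] at this
        exact (QuotientGroup.eq).mp this.symm
      have hgH : g ∈ H := by simpa using hmem 1
      refine hfaith g hgH ?_
      intro k hk
      have h1 : (k⁻¹)⁻¹ * (g * k⁻¹) ∈ H := hmem k⁻¹
      rw [inv_inv] at h1
      refine ⟨k * (g * k⁻¹), h1, ?_⟩
      group
    · -- stabilizers finitely generated
      intro s
      obtain ⟨x, rfl⟩ := QuotientGroup.mk_surjective s
      have hx1 : ((x : G ⧸ H)) = x • ((1 : G) : G ⧸ H) := by
        rw [MulAction.Quotient.smul_mk, smul_eq_mul, mul_one]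
      rw [hx1, MulAction.stabilizer_smul_eq_stabilizer_map_conj,
        MulAction.stabilizer_quotient]
      exact hHfg.map' _
    · -- finitely many orbits of 2-element subsets
      refine ⟨(fun f : G => ({((1 : G) : G ⧸ H), ((f : G) : G ⧸ H)} : Set (G ⧸ H))) ''
          {f ∈ F | ((f : G) : G ⧸ H) ≠ ((1 : G) : G ⧸ H)}, ?_, ?_, ?_⟩
      · exact (hFfin.subset (Set.sep_subset _ _)).image _
      · rintro U ⟨f, ⟨hfF, hfne⟩, rfl⟩
        exact Set.ncard_pair (fun hcon => hfne hcon.symm)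
      · intro T hT
        obtain ⟨a, b, hab, rfl⟩ := Set.ncard_eq_two.mp hT
        obtain ⟨x, rfl⟩ := QuotientGroup.mk_surjective a
        obtain ⟨y, rfl⟩ := QuotientGroup.mk_surjective b
        obtain ⟨h₁, hh₁, k₁, hk₁, hz⟩ := hprod (x⁻¹ * y)
        obtain ⟨f, hfF, h, hh, h', hh', hfh⟩ := hFcov k₁ hk₁
        have hge : (x * (h₁ * h'⁻¹)) • (((1 : G) : G ⧸ H)) = ((x : G) : G ⧸ H) := by
          rw [MulAction.Quotient.smul_mk, smul_eq_mul, mul_one]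
          refine (QuotientGroup.eq).mpr ?_
          have hrw : (x * (h₁ * h'⁻¹))⁻¹ * x = h' * h₁⁻¹ := by group
          rw [hrw]
          exact H.mul_mem hh' (H.inv_mem hh₁)
        have hgf : (x * (h₁ * h'⁻¹)) • ((f : G ⧸ H)) = ((y : G) : G ⧸ H) := by
          rw [MulAction.Quotient.smul_mk, smul_eq_mul]
          refine (QuotientGroup.eq).mpr ?_
          have hfe : h'⁻¹ * f = k₁ * h⁻¹ := by
            have hf2 : f = h' * k₁ * h⁻¹ := by rw [← hfh]; group
            rw [hf2]; group
          have hrw : (x * (h₁ * h'⁻¹) * f)⁻¹ * y = (h'⁻¹ * f)⁻¹ * h₁⁻¹ * (x⁻¹ * y) := by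
            group
          rw [hrw, hfe, hz]
          have hrw2 : (k₁ * h⁻¹)⁻¹ * h₁⁻¹ * (h₁ * k₁) = h := by group
          rw [hrw2]
          exact hh
        have hfne : ((f : G) : G ⧸ H) ≠ ((1 : G) : G ⧸ H) := by
          intro hcon
          apply hab
          rw [← hge, ← hgf, hcon]
        refine ⟨_, ⟨f, ⟨hfF, hfne⟩, rfl⟩, x * (h₁ * h'⁻¹), ?_⟩
        show (x * (h₁ * h'⁻¹)) • ({((1 : G) : G ⧸ H), ((f : G) : G ⧸ H)} : Set (G ⧸ H)) = _
        rw [Set.smul_set_insert, Set.smul_set_singleton, hge, hgf]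
  -- `G` is countable, so `G ⧸ H` embeds into `ℕ`; transfer along this to land in `Type v`.
  haveI hGcount : Countable G := by
    obtain ⟨n, rels, -, ⟨iso⟩⟩ := hfp
    haveI : Countable (FreeGroup (Fin n)) := FreeGroup.toWord_injective.countable
    haveI : Countable (PresentedGroup rels) := Quotient.countable
    exact Countable.of_equiv _ iso.toEquiv
  haveI : Countable (G ⧸ H) := Quotient.countable
  obtain ⟨cf, hcf⟩ := Countable.exists_injective_nat (G ⧸ H)
  let e : ULift.{v} (Set.range cf) ≃ G ⧸ H :=
    Equiv.ulift.trans (Equiv.ofInjective cf hcf).symm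
  obtain ⟨inst, hA⟩ := isTypeA_transfer e main
  exact ⟨ULift.{v} (Set.range cf), inst, hA⟩
end

section
/- Let G be an infinite, finitely presented, strongly shift-similar subgroup of Sym(ℕ). Then the natural action of G on ℕ is of type (A). -/
open Pointwise

universe u v

/-- The injection `s_j : ℕ → ℕ ∖ {j}`, sending `i` to `i` for `i < j` and `i` to `i + 1`
for `i ≥ j`. -/
def sMap (j i : ℕ) : ℕ := if i < j then i else i + 1

/-- The inverse of `s_j`, defined on `ℕ ∖ {j}`: it sends `i` to `i` for `i < j` and `i` to
`i - 1` for `i > j`. -/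
def sInv (j i : ℕ) : ℕ := if i < j then i else i - 1

/-- The underlying function of the permutation `ψ_j(g) = s_{g(j)}⁻¹ ∘ g|_{ℕ∖{j}} ∘ s_j`. -/
def shiftFun (j : ℕ) (g : Equiv.Perm ℕ) (i : ℕ) : ℕ := sInv (g j) (g (sMap j i))

/-- A subgroup `G ≤ Sym(ℕ)` is shift-similar if `ψ_j(g) ∈ G` for all `g ∈ G` and `j ∈ ℕ`,
and strongly shift-similar if moreover each `ψ_j` restricted to `G` is surjective onto
`G`. -/
def StronglyShiftSimilar (G : Subgroup (Equiv.Perm ℕ)) : Prop :=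
  (∀ g ∈ G, ∀ j : ℕ, ∃ g' ∈ G, ∀ i : ℕ, g' i = shiftFun j g i) ∧
  (∀ j : ℕ, ∀ h ∈ G, ∃ g ∈ G, ∀ i : ℕ, h i = shiftFun j g i)

namespace SSAux

lemma sInv_sMap (j i : ℕ) : sInv j (sMap j i) = i := by
  unfold sMap sInv; split_ifs <;> first | omega | exact ‹False›.elim

lemma sMap_ne (j i : ℕ) : sMap j i ≠ j := by
  unfold sMap; split_ifs <;> first | omega | exact ‹False›.elim

lemma sMap_sInv {j i : ℕ} (h : i ≠ j) : sMap j (sInv j i) = i := by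
  unfold sMap sInv; split_ifs <;> first | omega | exact ‹False›.elim

lemma sMap_zero (i : ℕ) : sMap 0 i = i + 1 := by unfold sMap; split_ifs <;> first | omega | exact ‹False›.elim

/-- `ψ_j(g)` as a permutation. -/
def shiftPerm (j : ℕ) (g : Equiv.Perm ℕ) : Equiv.Perm ℕ where
  toFun := shiftFun j g
  invFun := fun i => sInv j (g.symm (sMap (g j) i))
  left_inv := by
    intro i
    unfold shiftFun
    show sInv j (g.symm (sMap (g j) (sInv (g j) (g (sMap j i))))) = i
    have h1 : g (sMap j i) ≠ g j := fun h => sMap_ne j i (g.injective h)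
    rw [sMap_sInv h1, Equiv.symm_apply_apply, sInv_sMap]
  right_inv := by
    intro i
    unfold shiftFun
    show shiftFun j g (sInv j (g.symm (sMap (g j) i))) = i
    unfold shiftFun
    have h1 : g.symm (sMap (g j) i) ≠ j := by
      intro h
      have h2 := congrArg g h
      rw [Equiv.apply_symm_apply] at h2
      exact sMap_ne (g j) i h2
    rw [sMap_sInv h1, Equiv.apply_symm_apply, sInv_sMap]

@[simp] lemma shiftPerm_apply (j : ℕ) (g : Equiv.Perm ℕ) (i : ℕ) :
    shiftPerm j g i = shiftFun j g i := rfl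

lemma shiftPerm_one (j : ℕ) : shiftPerm j 1 = 1 := by
  apply Equiv.ext; intro i
  simp only [shiftPerm_apply, shiftFun, Equiv.Perm.one_apply]
  rw [sInv_sMap]

def zfun (k k' i : ℕ) : ℕ := if i = k then k' else sMap k' (sInv k i)

lemma zfun_linv (k k' : ℕ) : Function.LeftInverse (zfun k' k) (zfun k k') := by
  intro i
  unfold zfun sMap sInv
  split_ifs <;> first | omega | exact ‹False›.elim

/-- The cycle `ζ_{k,k'}` sending `k ↦ k'` and shifting in between. -/
def zeta (k k' : ℕ) : Equiv.Perm ℕ :=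
  ⟨zfun k k', zfun k' k, zfun_linv k k', zfun_linv k' k⟩

@[simp] lemma zeta_apply (k k' i : ℕ) : zeta k k' i = zfun k k' i := rfl

lemma zeta_inv (k k' : ℕ) : (zeta k k')⁻¹ = zeta k' k := rfl

lemma zeta_self (k : ℕ) : zeta k k = 1 := by
  apply Equiv.ext; intro i
  simp only [zeta_apply, zfun, sMap, sInv, Equiv.Perm.one_apply]
  split_ifs <;> first | omega | exact ‹False›.elim

lemma zeta_comp (m k k' : ℕ) : zeta m k' * zeta k m = zeta k k' := by
  apply Equiv.ext; intro i
  simp only [Equiv.Perm.mul_apply, zeta_apply, zfun, sMap, sInv]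
  split_ifs <;> first | omega | exact ‹False›.elim

lemma zeta_swap (k : ℕ) : zeta k (k+1) = Equiv.swap k (k+1) := by
  apply Equiv.ext; intro i
  simp only [zeta_apply, zfun, sMap, sInv, Equiv.swap_apply_def]
  split_ifs <;> first | omega | exact ‹False›.elim

/-- `ζ_{u,0} ∘ ζ_{0,u+1} = (0 (u+1))`. -/
lemma zeta_comp_swap (u : ℕ) : zeta u 0 * zeta 0 (u+1) = Equiv.swap 0 (u+1) := by
  apply Equiv.ext; intro i
  simp only [Equiv.Perm.mul_apply, zeta_apply, zfun, sMap, sInv, Equiv.swap_apply_def]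
  split_ifs <;> first | omega | exact ‹False›.elim

lemma psi_kill (u s : ℕ) : shiftPerm u (zeta u s) = 1 := by
  apply Equiv.ext; intro i
  simp only [shiftPerm_apply, shiftFun, zeta_apply, zfun, sMap, sInv, Equiv.Perm.one_apply]
  split_ifs <;> first | omega | exact ‹False›.elim

set_option maxHeartbeats 1600000 in
lemma psi_zeta_low {k k' : ℕ} (hk : 1 ≤ k) (hk' : 1 ≤ k') :
    shiftPerm 0 (zeta k k') = zeta (k-1) (k'-1) := by
  apply Equiv.ext; intro i
  simp only [shiftPerm_apply, shiftFun, zeta_apply, zfun, sMap, sInv]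
  split_ifs <;> first | omega | exact ‹False›.elim

set_option maxHeartbeats 1600000 in
lemma psi_zeta_mid {j u : ℕ} (h1 : 1 ≤ j) (h2 : j ≤ u) :
    shiftPerm j (zeta 0 u) = zeta 0 (u-1) := by
  apply Equiv.ext; intro i
  simp only [shiftPerm_apply, shiftFun, zeta_apply, zfun, sMap, sInv]
  split_ifs <;> first | omega | exact ‹False›.elim


/-- Cocycle identity: `ψ_j(ab) = ψ_{b(j)}(a) ψ_j(b)`. -/
lemma cocycle (j : ℕ) (a b : Equiv.Perm ℕ) :
    shiftPerm j (a * b) = shiftPerm (b j) a * shiftPerm j b := by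
  apply Equiv.ext; intro i
  have hne : b (sMap j i) ≠ b j := fun h => sMap_ne j i (b.injective h)
  simp only [shiftPerm_apply, Equiv.Perm.mul_apply, shiftFun]
  rw [sMap_sInv hne]

/-- Fiber lemma: two permutations with the same `ψ_0`-image differ by a `ζ`-cycle. -/
lemma fib {g g' : Equiv.Perm ℕ} (h : ∀ i, shiftFun 0 g i = shiftFun 0 g' i) :
    g' = zeta (g 0) (g' 0) * g := by
  apply Equiv.ext; intro m
  rcases Nat.eq_zero_or_pos m with rfl | hm
  · simp [Equiv.Perm.mul_apply, zeta_apply, zfun]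
  · obtain ⟨i, rfl⟩ : ∃ i, m = i + 1 := ⟨m - 1, by omega⟩
    have hh := h i
    unfold shiftFun at hh
    rw [sMap_zero] at hh
    have h1 : g (i+1) ≠ g 0 := fun h => by simpa using g.injective h
    have h2 : g' (i+1) ≠ g' 0 := fun h => by simpa using g'.injective h
    simp only [Equiv.Perm.mul_apply, zeta_apply, zfun, if_neg h1]
    rw [hh, sMap_sInv h2]

/-- Deleting `{0,1}` in either order gives the same result. -/
lemma psi_comm (x : Equiv.Perm ℕ) :
    shiftPerm 0 (shiftPerm 1 x) = shiftPerm 0 (shiftPerm 0 x) := by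
  apply Equiv.ext; intro i
  have e1 : sMap 1 0 = 0 := by unfold sMap; split_ifs <;> omega
  have e2 : sMap 1 (i + 1) = i + 1 + 1 := by unfold sMap; split_ifs <;> omega
  have hab : x 0 ≠ x 1 := fun h => by simpa using x.injective h
  have hta : x (i + 1 + 1) ≠ x 0 := fun h => by simpa using x.injective h
  have htb : x (i + 1 + 1) ≠ x 1 := fun h => by simpa using x.injective h
  simp only [shiftPerm_apply, shiftFun, sMap_zero, e1, e2]
  generalize x 0 = a at *
  generalize x 1 = b at *
  generalize x (i + 1 + 1) = t at *
  unfold sInv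
  split_ifs <;> omega

/-- A permutation fixing `s` whose `ψ_s`-image is trivial is trivial. -/
lemma inj0 {g : Equiv.Perm ℕ} {s : ℕ} (hfix : g s = s) (h : shiftPerm s g = 1) : g = 1 := by
  apply Equiv.ext; intro m
  rcases eq_or_ne m s with rfl | hm
  · simpa using hfix
  · have hi := Equiv.ext_iff.mp h (sInv s m)
    rw [shiftPerm_apply] at hi
    unfold shiftFun at hi
    rw [hfix, sMap_sInv hm, Equiv.Perm.one_apply] at hi
    have hgm : g m ≠ s := fun hh => hm (g.injective (by rw [hh, hfix]))
    have h3 := congrArg (sMap s) hi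
    rw [sMap_sInv hgm, sMap_sInv hm] at h3
    simpa using h3

section Grp

variable {G : Subgroup (Equiv.Perm ℕ)}

lemma memShift (hss : StronglyShiftSimilar G) {g : Equiv.Perm ℕ} (hg : g ∈ G) (j : ℕ) :
    shiftPerm j g ∈ G := by
  obtain ⟨g', hg', he⟩ := hss.1 g hg j
  have : g' = shiftPerm j g := Equiv.ext fun i => he i
  exact this ▸ hg'

lemma surjAt (hss : StronglyShiftSimilar G) {h : Equiv.Perm ℕ} (hh : h ∈ G) (j : ℕ) :
    ∃ g ∈ G, shiftPerm j g = h := by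
  obtain ⟨g, hg, he⟩ := hss.2 j h hh
  exact ⟨g, hg, Equiv.ext fun i => (he i).symm⟩

/-- A nonincreasing sequence of naturals is eventually constant. -/
lemma evConst (v : ℕ) : ∀ d : ℕ → ℕ, d 0 = v → (∀ n, d (n+1) ≤ d n) →
    ∃ N, ∀ n, N ≤ n → d n = d N := by
  induction v using Nat.strong_induction_on with
  | _ v ih =>
    intro d hd0 hmono
    by_cases hall : ∀ n, d n = d 0
    · exact ⟨0, fun n _ => by rw [hall n, hall 0]⟩
    · push_neg at hall
      obtain ⟨m, hm⟩ := hall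
      have hle : ∀ n, d n ≤ d 0 := by
        intro n
        induction n with
        | zero => exact le_rfl
        | succ n ihn => exact le_trans (hmono n) ihn
      have hlt : d m < v := hd0 ▸ (hle m).lt_of_ne hm
      obtain ⟨N, hN⟩ := ih (d m) hlt (fun n => d (n + m)) (by show d (0 + m) = d m; rw [Nat.zero_add])
        (fun n => by have := hmono (n + m); simpa [show n + 1 + m = n + m + 1 by omega] using this)
      refine ⟨N + m, fun n hn => ?_⟩
      have h1 := hN (n - m) (by omega)
      rwa [show n - m + m = n by omega] at h1

/-- Main lemma: if `G` contains no nontrivial `ζ`-cycle, it is trivial. -/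
lemma trivial_of_nozeta (hss : StronglyShiftSimilar G)
    (noz : ∀ k k', zeta k k' ∈ G → k = k') : ∀ h ∈ G, h = 1 := by
  have inj : ∀ g ∈ G, ∀ g' ∈ G, shiftPerm 0 g = shiftPerm 0 g' → g = g' := by
    intro g hg g' hg' he
    have hf := fib (g := g) (g' := g')
      (fun i => by rw [← shiftPerm_apply, ← shiftPerm_apply, he])
    have hzm : zeta (g 0) (g' 0) ∈ G := by
      have : zeta (g 0) (g' 0) = g' * g⁻¹ := eq_mul_inv_of_mul_eq hf.symm
      rw [this]; exact mul_mem hg' (inv_mem hg)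
    have heq := noz _ _ hzm
    rw [heq, zeta_self, one_mul] at hf
    exact hf.symm
  have psi12 : ∀ x ∈ G, shiftPerm 1 x = shiftPerm 0 x := fun x hx =>
    inj _ (memShift hss hx 1) _ (memShift hss hx 0) (psi_comm x)
  intro h hh
  set seq : ℕ → Equiv.Perm ℕ := fun n => (fun p => shiftPerm 0 p)^[n] h with hseqdef
  have hsucc : ∀ n, seq (n+1) = shiftPerm 0 (seq n) := fun n =>
    Function.iterate_succ_apply' _ _ _
  have hseqmem : ∀ n, seq n ∈ G := by
    intro n
    induction n with
    | zero => exact hh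
    | succ n ihn => rw [hsucc n]; exact memShift hss ihn 0
  have hd : ∀ n, seq (n+1) 0 = sInv (seq n 1) (seq n 0) := by
    intro n
    rw [hsucc n, ← psi12 _ (hseqmem n)]
    show shiftFun 1 (seq n) 0 = _
    unfold shiftFun
    rw [show sMap 1 0 = 0 by unfold sMap; split_ifs <;> omega]
  have hmono : ∀ n, seq (n+1) 0 ≤ seq n 0 := fun n => by
    rw [hd n]; unfold sInv; split_ifs <;> omega
  obtain ⟨N, hN⟩ := evConst (seq 0 0) (fun n => seq n 0) rfl hmono
  set c := seq N 0 with hc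
  have key : ∀ i, ∀ n, N ≤ n → seq n i = c + i := by
    intro i
    induction i with
    | zero => intro n hn; simpa using hN n hn
    | succ i ihi =>
      intro n hn
      have h1 : seq (n+1) i = c + i := ihi (n+1) (by omega)
      have h2 : seq (n+1) i = sInv c (seq n (i+1)) := by
        rw [hsucc n]
        show shiftFun 0 (seq n) i = _
        unfold shiftFun
        rw [sMap_zero, hN n hn]
      have hne : seq n (i+1) ≠ c := by
        intro hcc
        have : seq n (i+1) = seq n 0 := by rw [hcc, hN n hn]
        simpa using (seq n).injective this
      rw [h2] at h1
      unfold sInv at h1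
      split_ifs at h1 <;> omega
  have hc0 : c = 0 := by
    obtain ⟨i, hi⟩ : ∃ i, seq N i = 0 := ⟨(seq N).symm 0, Equiv.apply_symm_apply _ _⟩
    have := key i N le_rfl
    omega
  have hNone : seq N = 1 := by
    apply Equiv.ext; intro i
    have := key i N le_rfl
    simpa [hc0] using this
  have back : ∀ k, seq (N - k) = 1 := by
    intro k
    induction k with
    | zero => simpa using hNone
    | succ k ihk =>
      by_cases hk : N ≤ k
      · rw [show N - (k+1) = N - k by omega]; exact ihk
      · apply inj _ (hseqmem _) _ (one_mem G)
        have h1 : shiftPerm 0 (seq (N - (k+1))) = 1 := by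
          rw [← hsucc, show N - (k+1) + 1 = N - k by omega, ihk]
        rw [h1, shiftPerm_one]
  have := back N
  simpa [hseqdef] using this

lemma exzeta (hinf : Infinite G) (hss : StronglyShiftSimilar G) : ∃ k k', k ≠ k' ∧ zeta k k' ∈ G := by
  by_contra hno
  push_neg at hno
  have noz : ∀ k k', zeta k k' ∈ G → k = k' := by
    intro k k' hz
    by_contra hne
    exact (hno k k' hne) hz
  have htriv := trivial_of_nozeta hss noz
  have hsub : Subsingleton G :=
    ⟨fun a b => Subtype.ext (by rw [htriv _ a.2, htriv _ b.2])⟩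
  obtain ⟨a, b, hab⟩ := exists_pair_ne G
  exact hab (Subsingleton.elim a b)

lemma zeta_down (hss : StronglyShiftSimilar G) {k k' : ℕ} (hk : 1 ≤ k) (hk' : 1 ≤ k')
    (hz : zeta k k' ∈ G) : zeta (k-1) (k'-1) ∈ G := by
  have := memShift hss hz 0
  rwa [psi_zeta_low hk hk'] at this

lemma zeta_to0 (hss : StronglyShiftSimilar G) : ∀ k {k'}, k < k' → zeta k k' ∈ G → zeta 0 (k' - k) ∈ G := by
  intro k
  induction k with
  | zero => intro k' h hz; simpa using hz
  | succ k ihk =>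
    intro k' h hz
    have h1 := zeta_down hss (by omega) (by omega) hz
    rw [Nat.add_sub_cancel] at h1
    have h2 := ihk (k' := k' - 1) (by omega) h1
    rwa [show k' - 1 - k = k' - (k+1) by omega] at h2

lemma zeta0_down (hss : StronglyShiftSimilar G) {r : ℕ} (hr : 2 ≤ r) (hz : zeta 0 r ∈ G) :
    zeta 0 (r-1) ∈ G := by
  have := memShift hss hz 1
  rwa [psi_zeta_mid le_rfl (by omega)] at this

lemma zeta0_sub (hss : StronglyShiftSimilar G) {r : ℕ} (hz : zeta 0 r ∈ G) :
    ∀ d, 1 ≤ r - d → zeta 0 (r - d) ∈ G := by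
  intro d
  induction d with
  | zero => intro _; simpa using hz
  | succ d ihd =>
    intro hd
    have h1 := zeta0_down hss (show 2 ≤ r - d by omega) (ihd (by omega))
    rwa [show r - d - 1 = r - (d+1) by omega] at h1

lemma swap01_mem (hinf : Infinite G) (hss : StronglyShiftSimilar G) : Equiv.swap 0 1 ∈ G := by
  obtain ⟨k, k', hne, hz⟩ := exzeta hinf hss
  have main : ∀ a b : ℕ, a < b → zeta a b ∈ G → Equiv.swap 0 1 ∈ G := by
    intro a b hlt hzz
    have h0 := zeta_to0 hss a hlt hzz
    have h1 := zeta0_sub hss h0 (b - a - 1) (by omega)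
    rw [show b - a - (b - a - 1) = 1 by omega] at h1
    have h2 := zeta_swap 0
    norm_num at h2
    rwa [h2] at h1
  rcases lt_or_gt_of_ne hne with h | h
  · exact main _ _ h hz
  · exact main _ _ h (by rw [← zeta_inv]; exact inv_mem hz)

/-- From adjacent transpositions below a bound, all transpositions below the bound. -/
lemma swaps_of_adj {M : ℕ} (hadj : ∀ m, m ≤ M → Equiv.swap m (m+1) ∈ G) :
    ∀ a b, a ≤ M + 1 → b ≤ M + 1 → Equiv.swap a b ∈ G := by
  have key : ∀ d a, a + d ≤ M + 1 → Equiv.swap a (a + d) ∈ G := by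
    intro d
    induction d with
    | zero =>
      intro a _
      rw [Nat.add_zero, Equiv.swap_self]
      exact one_mem G
    | succ d ihd =>
      intro a hle
      rcases Nat.eq_zero_or_pos d with rfl | hd
      · have := hadj a (by omega)
        rwa [show a + (0+1) = a + 1 by omega]
      · have hswap := ihd a (by omega)
        have hsig : Equiv.swap (a+d) (a+d+1) ∈ G := hadj (a+d) (by omega)
        have hca := Equiv.swap_apply_apply (Equiv.swap (a+d) (a+d+1)) a (a+d)
        rw [Equiv.swap_apply_of_ne_of_ne (by omega) (by omega), Equiv.swap_apply_left] at hca
        have : Equiv.swap a (a + (d+1)) =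
            Equiv.swap (a+d) (a+d+1) * Equiv.swap a (a+d) * (Equiv.swap (a+d) (a+d+1))⁻¹ := by
          rw [show a + (d+1) = a + d + 1 by omega]
          exact hca
        rw [this]
        exact mul_mem (mul_mem hsig hswap) (inv_mem hsig)
  intro a b ha hb
  rcases le_total a b with h | h
  · have := key (b - a) a (by omega)
    rwa [show a + (b - a) = b by omega] at this
  · have := key (a - b) b (by omega)
    rw [show b + (a - b) = a by omega] at this
    rwa [Equiv.swap_comm]

/-- From adjacent transpositions below a bound, the zetas `ζ_{0,u}`, `u ≤ M+1`. -/
lemma zetas_of_adj {M : ℕ} (hadj : ∀ m, m ≤ M → Equiv.swap m (m+1) ∈ G) :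
    ∀ u, u ≤ M + 1 → zeta 0 u ∈ G := by
  intro u
  induction u with
  | zero => intro _; rw [zeta_self]; exact one_mem G
  | succ u ihu =>
    intro hu
    have h5 := zeta_comp_swap u
    have heq : zeta 0 (u+1) = zeta 0 u * Equiv.swap 0 (u+1) := by
      calc zeta 0 (u+1) = (zeta 0 u * zeta u 0) * zeta 0 (u+1) := by
            rw [zeta_comp, zeta_self, one_mul]
        _ = zeta 0 u * (zeta u 0 * zeta 0 (u+1)) := by rw [mul_assoc]
        _ = zeta 0 u * Equiv.swap 0 (u+1) := by rw [h5]
    rw [heq]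
    exact mul_mem (ihu (by omega)) (swaps_of_adj hadj 0 (u+1) (by omega) (by omega))

lemma adj_mem (hinf : Infinite G) (hss : StronglyShiftSimilar G) : ∀ M, Equiv.swap M (M+1) ∈ G := by
  intro M
  induction M using Nat.strong_induction_on with
  | _ M ih =>
    rcases M with _ | M
    · exact swap01_mem hinf hss
    · have adjle : ∀ m, m ≤ M → Equiv.swap m (m+1) ∈ G := fun m hm => ih m (by omega)
      obtain ⟨g, hgmem, hg⟩ := surjAt hss (adjle M le_rfl) 0
      have hE : shiftPerm 0 (Equiv.swap (M+1) (M+1+1)) = Equiv.swap M (M+1) := by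
        rw [← zeta_swap (M+1), psi_zeta_low (by omega) (by omega)]
        rw [show M+1-1 = M by omega, show M+1+1-1 = M+1 by omega]
        exact zeta_swap M
      have hE0 : Equiv.swap (M+1) (M+1+1) 0 = 0 :=
        Equiv.swap_apply_of_ne_of_ne (by omega) (by omega)
      have hfib : g = zeta 0 (g 0) * Equiv.swap (M+1) (M+1+1) := by
        have := fib (g := Equiv.swap (M+1) (M+1+1)) (g' := g)
          (fun i => by rw [← shiftPerm_apply, ← shiftPerm_apply, hE, hg])
        rwa [hE0] at this
      rcases Nat.lt_or_ge (g 0) (M+1+1) with hcase | hcase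
      · -- g 0 ≤ M+1
        have hzu : zeta 0 (g 0) ∈ G := zetas_of_adj adjle (g 0) (by omega)
        have heq2 : Equiv.swap (M+1) (M+1+1) = (zeta 0 (g 0))⁻¹ * g :=
          eq_inv_mul_of_mul_eq hfib.symm
        rw [heq2]
        exact mul_mem (inv_mem hzu) hgmem
      · -- g 0 ≥ M+2
        have hpsi : shiftPerm (M+1) g ∈ G := memShift hss hgmem (M+1)
        have hcalc : shiftPerm (M+1) g = zeta 0 (g 0 - 1) := by
          conv_lhs => rw [hfib]
          rw [cocycle]
          rw [show Equiv.swap (M+1) (M+1+1) (M+1) = M+1+1 from Equiv.swap_apply_left _ _]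
          rw [← zeta_swap (M+1), psi_kill, mul_one]
          exact psi_zeta_mid (by omega) (by omega)
        rw [hcalc] at hpsi
        have hzM1 : zeta 0 (M+1) ∈ G := zetas_of_adj adjle (M+1) (by omega)
        rcases Nat.eq_or_lt_of_le hcase with heq | hlt
        · -- g 0 = M+2
          rw [← heq] at hfib
          have hz2 : zeta (M+1) 0 * g ∈ G :=
            mul_mem (by rw [← zeta_inv]; exact inv_mem hzM1) hgmem
          have hzeq : zeta (M+1) 0 * g =
              Equiv.swap 0 (M+1+1) * Equiv.swap (M+1) (M+1+1) := by
            rw [hfib, ← mul_assoc, zeta_comp_swap]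
          set z := Equiv.swap 0 (M+1+1) * Equiv.swap (M+1) (M+1+1) with hzdef
          have hzmem : z ∈ G := by rw [← hzeq]; exact hz2
          have hza : z (M+1) = 0 := by
            rw [hzdef, Equiv.Perm.mul_apply, Equiv.swap_apply_left, Equiv.swap_apply_right]
          have hzb : z (M+1+1) = M+1 := by
            rw [hzdef, Equiv.Perm.mul_apply, Equiv.swap_apply_right,
              Equiv.swap_apply_of_ne_of_ne (by omega) (by omega)]
          have hia : z⁻¹ 0 = M+1 := by
            apply z.injective; rw [show z (z⁻¹ 0) = 0 from z.apply_symm_apply 0, hza]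
          have hib : z⁻¹ (M+1) = M+1+1 := by
            apply z.injective; rw [show z (z⁻¹ (M+1)) = M+1 from z.apply_symm_apply (M+1), hzb]
          have hconj := Equiv.swap_apply_apply z⁻¹ 0 (M+1)
          rw [hia, hib] at hconj
          rw [hconj, inv_inv]
          exact mul_mem (mul_mem (inv_mem hzmem)
            (swaps_of_adj adjle 0 (M+1) (by omega) (by omega))) hzmem
        · -- g 0 ≥ M+3
          have hz2 : zeta 0 (M+1+1) ∈ G := by
            have := zeta0_sub hss hpsi (g 0 - 1 - (M+1+1)) (by omega)
            rwa [show g 0 - 1 - (g 0 - 1 - (M+1+1)) = M+1+1 by omega] at this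
          have hsw : Equiv.swap 0 (M+1+1) ∈ G := by
            rw [← zeta_comp_swap (M+1)]
            exact mul_mem (by rw [← zeta_inv]; exact inv_mem hzM1) hz2
          have hsig : Equiv.swap 0 (M+1) ∈ G :=
            swaps_of_adj adjle 0 (M+1) (by omega) (by omega)
          have hca := Equiv.swap_apply_apply (Equiv.swap 0 (M+1)) 0 (M+1+1)
          rw [Equiv.swap_apply_left,
            Equiv.swap_apply_of_ne_of_ne (by omega) (by omega)] at hca
          rw [hca]
          exact mul_mem (mul_mem hsig hsw) (inv_mem hsig)

lemma swap_mem_all (hinf : Infinite G) (hss : StronglyShiftSimilar G) (a b : ℕ) : Equiv.swap a b ∈ G :=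
  swaps_of_adj (M := a + b) (fun m _ => adj_mem hinf hss m) a b (by omega) (by omega)

lemma zeta_mem_all (hinf : Infinite G) (hss : StronglyShiftSimilar G) (k k' : ℕ) : zeta k k' ∈ G := by
  have h0 : ∀ u, zeta 0 u ∈ G := fun u =>
    zetas_of_adj (M := u) (fun m _ => adj_mem hinf hss m) u (by omega)
  have : zeta 0 k' * zeta k 0 = zeta k k' := zeta_comp 0 k k'
  rw [← this]
  exact mul_mem (h0 k') (by rw [← zeta_inv]; exact inv_mem (h0 k))

end Grp

end SSAux

/-- The natural action of an infinite, finitely presented, strongly shift-similar group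
`G ≤ Sym(ℕ)` on `ℕ` is of type (A). -/
theorem isTypeA_of_stronglyShiftSimilar (G : Subgroup (Equiv.Perm ℕ))
    (hinf : Infinite G) (hfp : FinPresGroup G) (hss : StronglyShiftSimilar G) :
    IsTypeA G ℕ := by
  have hswap : ∀ a b : ℕ, Equiv.swap a b ∈ G := SSAux.swap_mem_all hinf hss
  have hzeta : ∀ k k' : ℕ, SSAux.zeta k k' ∈ G := SSAux.zeta_mem_all hinf hss
  refine ⟨?_, hfp, ?_, ?_⟩
  · -- faithfulness
    intro g hg
    apply Subtype.ext
    apply Equiv.ext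
    intro s
    have := hg s
    simpa [Subgroup.smul_def, Equiv.Perm.smul_def] using this
  · -- finitely generated stabilizers
    haveI hFG : Group.FG ↥G := by
      obtain ⟨n, rels, hfin, ⟨e⟩⟩ := hfp
      haveI : Group.FG (PresentedGroup rels) :=
        Group.fg_iff.mpr ⟨Set.range PresentedGroup.of,
          PresentedGroup.closure_range_of rels, Set.finite_range _⟩
      exact Group.fg_of_surjective (f := e.toMonoidHom) e.surjective
    intro s
    have hstabmem : ∀ x : MulAction.stabilizer (↥G) s, ((x : ↥G) : Equiv.Perm ℕ) s = s := by
      intro x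
      have hx := x.2
      rw [MulAction.mem_stabilizer_iff] at hx
      simpa [Subgroup.smul_def, Equiv.Perm.smul_def] using hx
    let Φ : MulAction.stabilizer (↥G) s →* ↥G := {
      toFun := fun x =>
        ⟨SSAux.shiftPerm s ((x : ↥G) : Equiv.Perm ℕ), SSAux.memShift hss (x : ↥G).2 s⟩
      map_one' := Subtype.ext (SSAux.shiftPerm_one s)
      map_mul' := by
        intro x y
        apply Subtype.ext
        show SSAux.shiftPerm s (((x : ↥G) : Equiv.Perm ℕ) * ((y : ↥G) : Equiv.Perm ℕ)) = _
        rw [SSAux.cocycle, hstabmem y]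
        rfl }
    have hinj : Function.Injective Φ := by
      rw [injective_iff_map_eq_one]
      intro x hx
      have hx' : SSAux.shiftPerm s ((x : ↥G) : Equiv.Perm ℕ) = 1 := Subtype.ext_iff.mp hx
      exact Subtype.ext (Subtype.ext (SSAux.inj0 (hstabmem x) hx'))
    have hsurj : Function.Surjective Φ := by
      intro h
      obtain ⟨g, hg, hgp⟩ := SSAux.surjAt hss h.2 s
      set E := SSAux.zeta (g s) s * g with hE
      have hEmem : E ∈ G := mul_mem (hzeta _ _) hg
      have hEs : E s = s := by
        rw [hE, Equiv.Perm.mul_apply]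
        show SSAux.zfun (g s) s (g s) = s
        simp [SSAux.zfun]
      have hpsi : SSAux.shiftPerm s E = (h : Equiv.Perm ℕ) := by
        rw [hE, SSAux.cocycle, SSAux.psi_kill, one_mul, hgp]
      refine ⟨⟨⟨E, hEmem⟩, ?_⟩, ?_⟩
      · rw [MulAction.mem_stabilizer_iff]
        simp [Subgroup.smul_def, Equiv.Perm.smul_def, hEs]
      · exact Subtype.ext hpsi
    have e := MulEquiv.ofBijective Φ ⟨hinj, hsurj⟩
    haveI : Group.FG ↥(MulAction.stabilizer (↥G) s) :=
      Group.fg_of_surjective (f := e.symm.toMonoidHom) e.symm.surjective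
    exact (Group.fg_iff_subgroup_fg _).mp this
  · -- finitely many orbits of pairs
    refine ⟨{({0, 1} : Set ℕ)}, Set.finite_singleton _, ?_, ?_⟩
    · intro U hU
      rw [Set.mem_singleton_iff] at hU
      subst hU
      exact Set.ncard_pair (by omega)
    · intro T hT
      obtain ⟨a, b, hab, rfl⟩ := Set.ncard_eq_two.mp hT
      refine ⟨{0, 1}, rfl, ?_⟩
      have hta : Equiv.swap 0 a 1 ≠ a := by
        rcases eq_or_ne a 1 with rfl | h
        · rw [Equiv.swap_apply_right]; omega
        · rw [Equiv.swap_apply_of_ne_of_ne (by omega) (Ne.symm h)]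
          exact Ne.symm h
      set σ := Equiv.swap (Equiv.swap 0 a 1) b * Equiv.swap 0 a with hσ
      have h0 : σ 0 = a := by
        rw [hσ, Equiv.Perm.mul_apply, Equiv.swap_apply_left,
          Equiv.swap_apply_of_ne_of_ne (Ne.symm hta) hab]
      have h1 : σ 1 = b := by
        rw [hσ, Equiv.Perm.mul_apply, Equiv.swap_apply_left]
      refine ⟨⟨σ, mul_mem (hswap _ _) (hswap _ _)⟩, ?_⟩
      show (⟨σ, _⟩ : ↥G) • (insert 0 {1} : Set ℕ) = {a, b}
      rw [Set.smul_set_insert, Set.smul_set_singleton]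
      simp only [Subgroup.smul_def, Equiv.Perm.smul_def, h0, h1]
end
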